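/- For every vector w in R^N and every symmetric traceless N×N real matrix H, one has ((N−1)/2)·λ_max[w⊗w − H] ≥ (1/2)‖H‖, where ‖H‖ denotes the operator norm (largest absolute value of an eigenvalue) of H. -/

import Mathlib

open Matrix BigOperators

/-- The largest eigenvalue of a symmetric matrix, via the variational (Rayleigh) characterization. -/
noncomputable def lamMax {N : ℕ} (A : Matrix (Fin N) (Fin N) ℝ) : ℝ :=
  sSup {x : ℝ | ∃ ξ : Fin N → ℝ, (∑ i, ξ i ^ 2) = 1 ∧ x = ξ ⬝ᵥ A.mulVec ξ}

/-- The operator norm of a symmetric matrix: the largest absolute value of an eigenvalue. -/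
noncomputable def symOpNorm {N : ℕ} (A : Matrix (Fin N) (Fin N) ℝ) : ℝ :=
  max (lamMax A) (lamMax (-A))

/-!
Since `w ⊗ w` is positive semidefinite, every Rayleigh quotient of `w ⊗ w - H` dominates the
corresponding one of `-H`, so `λ_max[w ⊗ w - H] ≥ λ_max[-H]`. For traceless `H`, some diagonal
entry of `-H` is nonnegative, so `λ_max[-H] ≥ 0`; and extending a unit vector `ξ` to an
orthonormal basis `ξ = b₀, b₁, …, b_{N-1}` gives
`⟪ξ, H ξ⟫ = -∑_{i ≠ 0} ⟪bᵢ, H bᵢ⟫ ≤ (N - 1) λ_max[-H]`.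
Hence `‖H‖ = max (λ_max[H]) (λ_max[-H]) ≤ (N - 1) λ_max[-H] ≤ (N - 1) λ_max[w ⊗ w - H]`.
-/

theorem Matrix.sum_dotProduct_mulVec_orthonormalBasis {n ι : Type*} [Fintype n] [DecidableEq n]
    [Fintype ι] (M : Matrix n n ℝ) (b : OrthonormalBasis ι ℝ (EuclideanSpace ℝ n)) :
    ∑ i, (b i).ofLp ⬝ᵥ M *ᵥ (b i).ofLp = M.trace := by
  rw [← Matrix.trace_toLin'_eq, ← LinearMap.trace_conj' _ (WithLp.linearEquiv 2 ℝ (n → ℝ)).symm,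
    LinearMap.trace_eq_sum_inner _ b]
  refine Fintype.sum_congr _ _ fun i => ?_
  simp [EuclideanSpace.inner_eq_star_dotProduct, dotProduct_comm]

theorem Matrix.dotProduct_vecMulVec_self_mulVec {n : Type*} [Fintype n] (w ξ : n → ℝ) :
    ξ ⬝ᵥ vecMulVec w w *ᵥ ξ = (w ⬝ᵥ ξ) ^ 2 := by
  rw [vecMulVec_mulVec, dotProduct_comm]
  simp [sq]

theorem exists_orthonormalBasis_apply_eq {𝕜 E ι : Type*} [RCLike 𝕜] [NormedAddCommGroup E]
    [InnerProductSpace 𝕜 E] [FiniteDimensional 𝕜 E] [Fintype ι]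
    (hcard : Module.finrank 𝕜 E = Fintype.card ι) {v : E} (hv : ‖v‖ = 1) (i₀ : ι) :
    ∃ b : OrthonormalBasis ι 𝕜 E, b i₀ = v := by
  have hsingle : Orthonormal 𝕜 (({i₀} : Set ι).domRestrict fun _ => v) :=
    orthonormal_subsingleton_iff.mpr fun _ => hv
  obtain ⟨b, hb⟩ := hsingle.exists_orthonormalBasis_extension_of_card_eq hcard
  exact ⟨b, hb i₀ rfl⟩

theorem EuclideanSpace.norm_eq_one_iff {n : Type*} [Fintype n] (x : EuclideanSpace ℝ n) :
    ‖x‖ = 1 ↔ ∑ i, x i ^ 2 = 1 := by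
  simp [EuclideanSpace.norm_eq]

theorem isCompact_setOf_sum_sq_eq_one {ι : Type*} [Fintype ι] :
    IsCompact {ξ : ι → ℝ | ∑ i, ξ i ^ 2 = 1} := by
  refine (isCompact_closedBall 0 1).of_isClosed_subset
    (isClosed_eq (by fun_prop) continuous_const) fun ξ hξ => ?_
  rw [mem_closedBall_zero_iff, pi_norm_le_iff_of_nonneg zero_le_one]
  intro i
  rw [Real.norm_eq_abs, ← sq_le_one_iff_abs_le_one, ← hξ.out]
  exact Finset.single_le_sum (fun j _ => sq_nonneg (ξ j)) (Finset.mem_univ i)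

section Rayleigh

variable {N : ℕ}

theorem bddAbove_rayleigh (M : Matrix (Fin N) (Fin N) ℝ) :
    BddAbove {x : ℝ | ∃ ξ : Fin N → ℝ, (∑ i, ξ i ^ 2) = 1 ∧ x = ξ ⬝ᵥ M.mulVec ξ} := by
  obtain ⟨c, hc⟩ := (isCompact_setOf_sum_sq_eq_one.image (f := fun ξ => ξ ⬝ᵥ M *ᵥ ξ)
    (by fun_prop)).bddAbove
  exact ⟨c, fun _ ⟨ξ, hξ, hx⟩ => hx ▸ hc ⟨ξ, hξ, rfl⟩⟩

theorem dotProduct_mulVec_le_lamMax {M : Matrix (Fin N) (Fin N) ℝ} {ξ : Fin N → ℝ}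
    (hξ : ∑ i, ξ i ^ 2 = 1) : ξ ⬝ᵥ M *ᵥ ξ ≤ lamMax M :=
  le_csSup (bddAbove_rayleigh M) ⟨ξ, hξ, rfl⟩

theorem sum_sq_single_one (i : Fin N) : ∑ j, (Pi.single i 1 : Fin N → ℝ) j ^ 2 = 1 := by
  simp [Pi.single_apply]

theorem diag_le_lamMax (M : Matrix (Fin N) (Fin N) ℝ) (i : Fin N) : M i i ≤ lamMax M := by
  simpa using dotProduct_mulVec_le_lamMax (M := M) (sum_sq_single_one i)

variable [NeZero N]

theorem lamMax_le {M : Matrix (Fin N) (Fin N) ℝ} {c : ℝ}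
    (h : ∀ ξ : Fin N → ℝ, ∑ i, ξ i ^ 2 = 1 → ξ ⬝ᵥ M *ᵥ ξ ≤ c) : lamMax M ≤ c :=
  csSup_le ⟨_, Pi.single 0 1, sum_sq_single_one 0, rfl⟩ fun _ ⟨ξ, hξ, hx⟩ => hx ▸ h ξ hξ

theorem lamMax_mono {M M' : Matrix (Fin N) (Fin N) ℝ}
    (h : ∀ ξ : Fin N → ℝ, ξ ⬝ᵥ M *ᵥ ξ ≤ ξ ⬝ᵥ M' *ᵥ ξ) : lamMax M ≤ lamMax M' :=
  lamMax_le fun ξ hξ => (h ξ).trans (dotProduct_mulVec_le_lamMax hξ)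

theorem lamMax_nonneg_of_trace_nonneg {M : Matrix (Fin N) (Fin N) ℝ} (hM : 0 ≤ M.trace) :
    0 ≤ lamMax M := by
  obtain ⟨i, -, hi⟩ := Finset.exists_le_of_sum_le Finset.univ_nonempty
    (by simpa [Matrix.trace] using hM : ∑ _i : Fin N, (0 : ℝ) ≤ ∑ i, M i i)
  exact hi.trans (diag_le_lamMax M i)

theorem dotProduct_mulVec_le_of_trace_eq_zero {M : Matrix (Fin N) (Fin N) ℝ}
    (hM : M.trace = 0) {ξ : Fin N → ℝ} (hξ : ∑ i, ξ i ^ 2 = 1) :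
    ξ ⬝ᵥ M *ᵥ ξ ≤ ((N : ℝ) - 1) * lamMax (-M) := by
  obtain ⟨b, hb⟩ := exists_orthonormalBasis_apply_eq (𝕜 := ℝ) (ι := Fin N) (by simp)
    ((EuclideanSpace.norm_eq_one_iff (WithLp.toLp 2 ξ)).mpr hξ) (0 : Fin N)
  set q : Fin N → ℝ := fun i => (b i).ofLp ⬝ᵥ M *ᵥ (b i).ofLp
  have hq_sum : q 0 + ∑ i ∈ Finset.univ.erase 0, q i = 0 := by
    rw [Finset.add_sum_erase _ _ (Finset.mem_univ 0), sum_dotProduct_mulVec_orthonormalBasis, hM]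
  have hq_le : ∀ i, -q i ≤ lamMax (-M) := fun i => by
    simpa [q, Matrix.neg_mulVec] using dotProduct_mulVec_le_lamMax (M := -M)
      ((EuclideanSpace.norm_eq_one_iff _).mp (b.norm_eq_one i))
  have hcard : ((Finset.univ.erase (0 : Fin N)).card : ℝ) = N - 1 := by
    simp [Finset.card_erase_of_mem, Nat.cast_sub NeZero.one_le]
  calc ξ ⬝ᵥ M *ᵥ ξ = q 0 := by simp [q, hb]
    _ = ∑ i ∈ Finset.univ.erase 0, -q i := by rw [Finset.sum_neg_distrib]; linarith
    _ ≤ ∑ _i ∈ Finset.univ.erase (0 : Fin N), lamMax (-M) := Finset.sum_le_sum fun i _ => hq_le i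
    _ = (N - 1) * lamMax (-M) := by rw [Finset.sum_const, nsmul_eq_mul, hcard]

theorem lamMax_le_of_trace_eq_zero {M : Matrix (Fin N) (Fin N) ℝ} (hM : M.trace = 0) :
    lamMax M ≤ ((N : ℝ) - 1) * lamMax (-M) :=
  lamMax_le fun _ => dotProduct_mulVec_le_of_trace_eq_zero hM

theorem lamMax_neg_le_lamMax_vecMulVec_sub (w : Fin N → ℝ) (M : Matrix (Fin N) (Fin N) ℝ) :
    lamMax (-M) ≤ lamMax (vecMulVec w w - M) :=
  lamMax_mono fun ξ => by
    rw [sub_eq_neg_add, add_mulVec, dotProduct_add, dotProduct_vecMulVec_self_mulVec]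
    nlinarith [sq_nonneg (w ⬝ᵥ ξ)]

end Rayleigh

theorem symOpNorm_le_of_trace_eq_zero {N : ℕ} (hN : 2 ≤ N) {M : Matrix (Fin N) (Fin N) ℝ}
    (hM : M.trace = 0) : symOpNorm M ≤ ((N : ℝ) - 1) * lamMax (-M) := by
  have : NeZero N := ⟨by omega⟩
  have hN' : (1 : ℝ) ≤ N - 1 := by
    rw [le_sub_iff_add_le]; exact_mod_cast hN
  exact max_le (lamMax_le_of_trace_eq_zero hM)
    (le_mul_of_one_le_left (lamMax_nonneg_of_trace_nonneg (by simp [hM])) hN')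

theorem stmt1_general (N : ℕ) (hN : 2 ≤ N) (w : Fin N → ℝ) (H : Matrix (Fin N) (Fin N) ℝ)
    (htr : H.trace = 0) :
    ((N : ℝ) - 1) / 2 * lamMax (vecMulVec w w - H) ≥ 1 / 2 * symOpNorm H := by
  have : NeZero N := ⟨by omega⟩
  have hN' : (0 : ℝ) ≤ N - 1 := by
    rw [sub_nonneg]; exact_mod_cast (by omega : 1 ≤ N)
  calc 1 / 2 * symOpNorm H ≤ 1 / 2 * (((N : ℝ) - 1) * lamMax (-H)) := by
        gcongr; exact symOpNorm_le_of_trace_eq_zero hN htr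
    _ ≤ 1 / 2 * (((N : ℝ) - 1) * lamMax (vecMulVec w w - H)) := by
        gcongr; exact lamMax_neg_le_lamMax_vecMulVec_sub w H
    _ = ((N : ℝ) - 1) / 2 * lamMax (vecMulVec w w - H) := by ring

theorem stmt1 (N : ℕ) (hN : 2 ≤ N) (w : Fin N → ℝ) (H : Matrix (Fin N) (Fin N) ℝ)
    (hsymm : H.IsSymm) (htr : H.trace = 0) :
    ((N : ℝ) - 1) / 2 * lamMax (vecMulVec w w - H) ≥ 1 / 2 * symOpNorm H :=
  stmt1_general N hN w H htr
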